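/- Let n ≥ 2. If φ is a partial proper edge coloring of two edges of C_{2n} □ K_2, then φ can be extended to a proper 3-edge coloring of C_{2n} □ K_2. -/

import Mathlib

open SimpleGraph

variable {V : Type*}

/-- Two edges of `G` are adjacent if both are edges, they are distinct,
and they share a vertex. -/
def EdgeAdj (G : SimpleGraph V) (e f : Sym2 V) : Prop :=
  e ∈ G.edgeSet ∧ f ∈ G.edgeSet ∧ e ≠ f ∧ ∃ v, v ∈ e ∧ v ∈ f

/-- A proper edge coloring (with natural-number colors). -/
def IsProperEdgeColoring (G : SimpleGraph V) (C : Sym2 V → ℕ) : Prop :=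
  ∀ ⦃e f⦄, EdgeAdj G e f → C e ≠ C f

/-- A partial proper edge coloring: colored edges are edges of `G`, and
adjacent colored edges receive distinct colors. -/
def IsPartialProperEdgeColoring (G : SimpleGraph V) (φ : Sym2 V → Option ℕ) : Prop :=
  (∀ e, φ e ≠ none → e ∈ G.edgeSet) ∧
  ∀ ⦃e f⦄, EdgeAdj G e f → φ e ≠ none → φ e ≠ φ f

/-- The partial coloring uses colors from `{0, ..., t-1}`. -/
def UsesColors (φ : Sym2 V → Option ℕ) (t : ℕ) : Prop :=
  ∀ e a, φ e = some a → a < t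

/-- The (total) coloring uses colors from `{0, ..., t-1}` on all edges of `G`. -/
def ColorsBelow (G : SimpleGraph V) (C : Sym2 V → ℕ) (t : ℕ) : Prop :=
  ∀ e ∈ G.edgeSet, C e < t

/-- `C` agrees with the partial coloring `φ` on all precolored edges. -/
def ExtendsColoring (C : Sym2 V → ℕ) (φ : Sym2 V → Option ℕ) : Prop :=
  ∀ e a, φ e = some a → C e = a

/-- `φ` extends to a proper edge coloring of `G` with `t` colors. -/
def Extendable (G : SimpleGraph V) (φ : Sym2 V → Option ℕ) (t : ℕ) : Prop :=
  ∃ C, IsProperEdgeColoring G C ∧ ColorsBelow G C t ∧ ExtendsColoring C φ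

/-- The set of precolored edges of `φ`. -/
def Precolored (φ : Sym2 V → Option ℕ) : Set (Sym2 V) := {e | φ e ≠ none}

/-- The chromatic index: least `t` admitting a proper edge coloring with `t` colors. -/
noncomputable def chromaticIndex (G : SimpleGraph V) : ℕ :=
  sInf {t | ∃ C, IsProperEdgeColoring G C ∧ ColorsBelow G C t}

/-- A set of edges is independent (a matching) if no two distinct members share a vertex. -/
def IndependentEdges (S : Set (Sym2 V)) : Prop :=
  ∀ e ∈ S, ∀ f ∈ S, e ≠ f → ∀ v, v ∈ e → v ∉ f


/-!
Write `m = 2n`; the edges of `C_m □ K_2` are the rungs `{(i, 0), (i, 1)}` and the rails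
`{(i, l), (i + 1, l)}`. Two kinds of proper 3-edge-colourings suffice.

A *mirror* colouring colours the rail `(i, l)` by `g i` for a proper colouring `g` of the cyclic
sequence `Fin m` (`g i ≠ g (i + 1)`) and gives the rung at `i` the colour missing from `g (i - 1)`
and `g i`. Such `g` are closed walks of length `m` in `K_3`, and `K_3` has a walk of every length
`≥ 2` between any two vertices (of length 1 between distinct ones), so `g` can be prescribed on
two short windows of consecutive positions, the gaps between them being filled freely.

The other kind gives every rung one colour `γ` and alternates the two other colours along each
copy of `C_m` (this needs `m` even), with independent phases in the two copies.

Two rungs of equal colour, a rung and a rail of different colours, and two rails in different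
copies are handled by the second kind; everything else by a mirror colouring.
-/

open Fin.CommRing

theorem EdgeAdj.symm {G : SimpleGraph V} {e f : Sym2 V} (h : EdgeAdj G e f) : EdgeAdj G f e :=
  let ⟨he, hf, hne, v, hve, hvf⟩ := h
  ⟨hf, he, hne.symm, v, hvf, hve⟩

theorem extendable_of_precolored_eq_pair {G : SimpleGraph V}
    {φ : Sym2 V → Option ℕ} {t : ℕ} {e f : Sym2 V} (hP : Precolored φ = {e, f}) {a b : ℕ}
    (hφe : φ e = some a) (hφf : φ f = some b) {C : Sym2 V → ℕ}
    (hC : IsProperEdgeColoring G C) (hCb : ColorsBelow G C t) (hCe : C e = a)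
    (hCf : C f = b) : Extendable G φ t := by
  refine ⟨C, hC, hCb, fun g c hg => ?_⟩
  have hgP : g ∈ Precolored φ := fun h => by simp [h] at hg
  rw [hP] at hgP
  rcases hgP with rfl | rfl
  · rw [hφe] at hg; rw [hCe, Option.some_inj.mp hg]
  · rw [hφf] at hg; rw [hCf, Option.some_inj.mp hg]

section FinArith

variable {m : ℕ} [NeZero m]

theorem val_add_one_sub (i j : Fin m) : (i + 1 - j).val = ((i - j).val + 1) % m := by
  rw [show i + 1 - j = (i - j) + 1 by ring, Fin.val_add, Fin.val_one', Nat.add_mod_mod]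

theorem eq_add_one_of_val_sub_eq_one {i k : Fin m} (h : (k - i).val = 1) : k = i + 1 := by
  have hm : 1 < m := h ▸ (k - i).isLt
  rw [← sub_add_cancel k i, add_comm, add_right_inj]
  exact Fin.ext (by rw [h, Fin.val_one', Nat.mod_eq_of_lt hm])

theorem add_one_eq_of_val_sub_add_one_eq {j k : Fin m} (h : (k - j).val + 1 = m) :
    k + 1 = j := by
  have h0 : k - j + 1 = 0 := Fin.ext (by rw [Fin.val_add, Fin.val_one', Nat.add_mod_mod, h]; simp)
  rw [← sub_add_cancel k j, add_right_comm, h0, zero_add]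

theorem add_one_add_one_ne_self (hm : 3 ≤ m) (i : Fin m) : i + 1 + 1 ≠ i := by
  intro h
  have h2 : ((2 : ℕ) : Fin m) = 0 := by
    rw [add_assoc, add_eq_left] at h
    exact_mod_cast h
  have := congrArg Fin.val h2
  simp [Nat.mod_eq_of_lt (by omega : 2 < m)] at this

end FinArith

section CycleColorings

variable {α : Type*}

theorem exists_walk_top_length_eq [Fintype α] (hα : 2 < Fintype.card α) :
    ∀ (L : ℕ) {x y : α}, (L = 0 → x = y) → (L = 1 → x ≠ y) →
      ∃ p : (⊤ : SimpleGraph α).Walk x y, p.length = L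
  | 0, x, _, h₀, _ => by
    obtain rfl := h₀ rfl
    exact ⟨.nil, rfl⟩
  | 1, _, _, _, h₁ => ⟨.cons (h₁ rfl) .nil, rfl⟩
  | L + 2, x, y, _, _ => by
    classical
    obtain ⟨z, -, hz⟩ := Finset.exists_mem_notMem_of_card_lt_card
      (s := {x, y}) (t := Finset.univ) (by simpa using (Finset.card_le_two).trans_lt hα)
    have hzx : x ≠ z := fun h => hz (by simp [h])
    have hzy : z ≠ y := fun h => hz (by simp [h])
    obtain ⟨p, hp⟩ := exists_walk_top_length_eq hα (L + 1) (by omega) (fun _ => hzy)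
    exact ⟨.cons hzx p, by simp [hp]⟩

variable {m : ℕ} [NeZero m]

theorem exists_cycle_hom_of_closedWalk {G : SimpleGraph α} {x : α} (W : G.Walk x x)
    (hW : W.length = m) (j : Fin m) :
    ∃ g : Fin m → α, (∀ i, G.Adj (g i) (g (i + 1))) ∧ ∀ t ≤ m, g (j + t) = W.getVert t := by
  refine ⟨fun i => W.getVert (i - j).val, fun i => ?_, fun t ht => ?_⟩
  · have hlt := (i - j).isLt
    simp only [val_add_one_sub]
    rcases Nat.lt_or_ge ((i - j).val + 1) m with h | h
    · rw [Nat.mod_eq_of_lt h]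
      exact W.adj_getVert_succ (by omega)
    · have hm : (i - j).val + 1 = m := by omega
      have hadj := W.adj_getVert_succ (i := (i - j).val) (by omega)
      rw [show (i - j).val + 1 = W.length by omega, W.getVert_length] at hadj
      rwa [hm, Nat.mod_self, W.getVert_zero]
  · rcases ht.lt_or_eq with ht | rfl
    · simp [Fin.val_natCast, Nat.mod_eq_of_lt ht]
    · simp [← hW, W.getVert_length]

theorem exists_cycle_coloring_through [Fintype α] (hα : 2 < Fintype.card α) (j : Fin m)
    {x₁ y₁ x₂ y₂ : α} (S₁ : (⊤ : SimpleGraph α).Walk x₁ y₁)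
    (S₂ : (⊤ : SimpleGraph α).Walk x₂ y₂) (L₁ L₂ : ℕ)
    (hL : S₁.length + L₁ + S₂.length + L₂ = m)
    (h₁₀ : L₁ = 0 → y₁ = x₂) (h₁₁ : L₁ = 1 → y₁ ≠ x₂)
    (h₂₀ : L₂ = 0 → y₂ = x₁) (h₂₁ : L₂ = 1 → y₂ ≠ x₁) :
    ∃ g : Fin m → α, (∀ i, g i ≠ g (i + 1)) ∧
      (∀ t ≤ S₁.length, g (j + t) = S₁.getVert t) ∧
      ∀ t ≤ S₂.length, g (j + ↑(S₁.length + L₁ + t)) = S₂.getVert t := by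
  obtain ⟨J₁, hJ₁⟩ := exists_walk_top_length_eq hα L₁ h₁₀ h₁₁
  obtain ⟨J₂, hJ₂⟩ := exists_walk_top_length_eq hα L₂ h₂₀ h₂₁
  set W := S₁.append (J₁.append (S₂.append J₂))
  obtain ⟨g, hg, hgW⟩ := exists_cycle_hom_of_closedWalk W
    (by simp only [W, SimpleGraph.Walk.length_append]; omega) j
  refine ⟨g, fun i => (hg i).ne, fun t ht => ?_, fun t ht => ?_⟩
  · rw [hgW t (by omega), SimpleGraph.Walk.getVert_append']
    simp [ht]
  · rw [hgW _ (by omega)]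
    have hsub : S₁.length + L₁ + t - S₁.length - L₁ = t := by omega
    simp only [W, SimpleGraph.Walk.getVert_append, hJ₁, hsub]
    rcases ht.lt_or_eq with ht | rfl <;> split_ifs <;> first | omega | simp

end CycleColorings

section Alternating

variable {α : Type*} {m : ℕ}

def alternating (j : Fin m) (x y : α) (i : Fin m) : α := if Even (i - j).val then x else y

theorem alternating_self [NeZero m] (j : Fin m) (x y : α) : alternating j x y j = x := by
  simp [alternating]

theorem alternating_eq_or_eq (j : Fin m) (x y : α) (i : Fin m) :
    alternating j x y i = x ∨ alternating j x y i = y := by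
  unfold alternating; split_ifs <;> simp

theorem alternating_ne_add_one [NeZero m] (hm : Even m) (j : Fin m) {x y : α} (hxy : x ≠ y)
    (i : Fin m) : alternating j x y i ≠ alternating j x y (i + 1) := by
  have hlt := (i - j).isLt
  unfold alternating
  rw [val_add_one_sub]
  rcases Nat.lt_or_ge ((i - j).val + 1) m with h | h
  · rw [Nat.mod_eq_of_lt h]
    by_cases he : Even (i - j).val <;> simp [he, Nat.even_add_one, hxy, hxy.symm]
  · have hodd : ¬ Even (i - j).val := by
      rw [show (i - j).val = m - 1 by omega]
      exact Nat.not_even_iff_odd.mpr (Nat.Even.sub_odd (by omega) hm odd_one)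
    simp [show (i - j).val + 1 = m by omega, hodd, hxy.symm]

end Alternating

section Prism

variable {m : ℕ}

abbrev prism (m : ℕ) : SimpleGraph (Fin m × Fin 2) := (cycleGraph m).boxProd ⊤

def rung (i : Fin m) : Sym2 (Fin m × Fin 2) := s((i, 0), (i, 1))

theorem rung_mem_edgeSet (i : Fin m) : rung i ∈ (prism m).edgeSet := by
  simp [rung, boxProd_adj]

variable [NeZero m]

def rail (l : Fin 2) (i : Fin m) : Sym2 (Fin m × Fin 2) := s((i, l), (i + 1, l))

theorem rail_mem_edgeSet (hm : 2 ≤ m) (l : Fin 2) (i : Fin m) :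
    rail l i ∈ (prism m).edgeSet := by
  simp [rail, boxProd_adj, cycleGraph_adj', Nat.mod_eq_of_lt hm]

theorem eq_rung_or_rail_of_mem {e : Sym2 (Fin m × Fin 2)} (he : e ∈ (prism m).edgeSet)
    {v : Fin m × Fin 2} (hv : v ∈ e) :
    e = rung v.1 ∨ e = rail v.2 v.1 ∨ e = rail v.2 (v.1 - 1) := by
  obtain ⟨⟨k, l'⟩, rfl⟩ := Sym2.mem_iff_exists.mp hv
  obtain ⟨i, l⟩ := v
  rw [mem_edgeSet, boxProd_adj, cycleGraph_adj'] at he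
  rcases he with ⟨h | h, rfl⟩ | ⟨hl, rfl⟩ <;> dsimp only at *
  · obtain rfl := eq_add_one_of_val_sub_eq_one h
    simp [rail, Sym2.eq_swap]
  · obtain rfl := eq_add_one_of_val_sub_eq_one h
    simp [rail]
  · left
    fin_cases l <;> fin_cases l' <;> simp_all [rung, Sym2.eq_swap]

theorem eq_rung_or_rail {e : Sym2 (Fin m × Fin 2)} (he : e ∈ (prism m).edgeSet) :
    (∃ i, e = rung i) ∨ ∃ l i, e = rail l i := by
  induction e using Sym2.ind with
  | _ u w =>
    rcases eq_rung_or_rail_of_mem he (Sym2.mem_mk_left u w) with h | h | h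
    exacts [.inl ⟨_, h⟩, .inr ⟨_, _, h⟩, .inr ⟨_, _, h⟩]

def prismEdge : Fin m ⊕ (Fin 2 × Fin m) → Sym2 (Fin m × Fin 2) :=
  Sum.elim rung fun p => rail p.1 p.2

variable (hm : 3 ≤ m)
include hm

theorem prismEdge_injective : Function.Injective (prismEdge (m := m)) := by
  rintro (i | ⟨l, i⟩) (k | ⟨l', k⟩) h <;> simp [prismEdge, rung, rail, Prod.ext_iff] at h
  · rw [h]
  · rcases h with ⟨⟨-, rfl⟩, -, h⟩ | ⟨⟨-, rfl⟩, -, h⟩ <;> simp at h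
  · rcases h with ⟨⟨-, rfl⟩, -, h⟩ | ⟨⟨-, rfl⟩, -, h⟩ <;> simp at h
  · rcases h with ⟨rfl, rfl⟩ | ⟨⟨rfl, rfl⟩, h, -⟩
    · rfl
    · exact absurd h (add_one_add_one_ne_self hm k)

theorem rung_ne_rail (i j : Fin m) (l : Fin 2) : rung i ≠ rail l j :=
  (prismEdge_injective hm).ne (a₁ := .inl i) (a₂ := .inr (l, j)) Sum.inl_ne_inr

theorem rail_ne_rail_add_one (l : Fin 2) (i : Fin m) : rail l i ≠ rail l (i + 1) := by
  refine (prismEdge_injective hm).ne (a₁ := .inr (l, i)) (a₂ := .inr (l, i + 1)) ?_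
  intro h
  have h1 := congrArg Fin.val (add_eq_left.mp (congrArg Prod.snd (Sum.inr_injective h)).symm)
  rw [Fin.val_one', Nat.mod_eq_of_lt (by omega), Fin.val_zero] at h1
  exact one_ne_zero h1

theorem edgeAdj_rung_rail (i : Fin m) (l : Fin 2) : EdgeAdj (prism m) (rung i) (rail l i) :=
  ⟨rung_mem_edgeSet i, rail_mem_edgeSet (by omega) l i, rung_ne_rail hm _ _ _, (i, l),
    by fin_cases l <;> simp [rung], by simp [rail]⟩

theorem edgeAdj_rung_rail_sub_one (i : Fin m) (l : Fin 2) :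
    EdgeAdj (prism m) (rung i) (rail l (i - 1)) :=
  ⟨rung_mem_edgeSet i, rail_mem_edgeSet (by omega) l _, rung_ne_rail hm _ _ _, (i, l),
    by fin_cases l <;> simp [rung], by simp [rail]⟩

theorem edgeAdj_rail_rail_add_one (l : Fin 2) (i : Fin m) :
    EdgeAdj (prism m) (rail l i) (rail l (i + 1)) :=
  ⟨rail_mem_edgeSet (by omega) l i, rail_mem_edgeSet (by omega) l _,
    rail_ne_rail_add_one hm l i, (i + 1, l), by simp [rail], by simp [rail]⟩

end Prism

section PrismColorings

variable {m : ℕ} [NeZero m]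

noncomputable def prismColoring (r : Fin m → ℕ) (c : Fin 2 → Fin m → ℕ) :
    Sym2 (Fin m × Fin 2) → ℕ :=
  Function.extend prismEdge (Sum.elim r fun p => c p.1 p.2) 0

section

variable (hm : 3 ≤ m) (r : Fin m → ℕ) (c : Fin 2 → Fin m → ℕ)
include hm

theorem prismColoring_rung (i : Fin m) : prismColoring r c (rung i) = r i :=
  (prismEdge_injective hm).extend_apply _ _ (Sum.inl i)

theorem prismColoring_rail (l : Fin 2) (i : Fin m) : prismColoring r c (rail l i) = c l i :=
  (prismEdge_injective hm).extend_apply _ _ (Sum.inr (l, i))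

theorem isProperEdgeColoring_prismColoring (h₁ : ∀ l i, r i ≠ c l i)
    (h₂ : ∀ l i, r i ≠ c l (i - 1)) (h₃ : ∀ l i, c l i ≠ c l (i - 1)) :
    IsProperEdgeColoring (prism m) (prismColoring r c) := by
  rintro e f ⟨he, hf, hne, v, hve, hvf⟩
  rcases eq_rung_or_rail_of_mem he hve with rfl | rfl | rfl <;>
    rcases eq_rung_or_rail_of_mem hf hvf with rfl | rfl | rfl <;>
    simp only [prismColoring_rung hm, prismColoring_rail hm] <;>
    first | exact absurd rfl hne | exact h₁ _ _ | exact h₂ _ _ | exact h₃ _ _ |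
      exact (h₁ _ _).symm | exact (h₂ _ _).symm | exact (h₃ _ _).symm

theorem colorsBelow_prismColoring {t : ℕ} (hr : ∀ i, r i < t) (hc : ∀ l i, c l i < t) :
    ColorsBelow (prism m) (prismColoring r c) t := by
  intro e he
  rcases eq_rung_or_rail he with ⟨i, rfl⟩ | ⟨l, i, rfl⟩
  · rw [prismColoring_rung hm]; exact hr i
  · rw [prismColoring_rail hm]; exact hc l i

end

theorem exists_mirror_coloring (hm : 3 ≤ m) (g : Fin m → Fin 3) (hg : ∀ i, g i ≠ g (i + 1)) :
    ∃ C, IsProperEdgeColoring (prism m) C ∧ ColorsBelow (prism m) C 3 ∧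
      (∀ l i, C (rail l i) = g i) ∧ ∀ i, C (rung i) = 3 - g (i - 1) - g i := by
  have hne : ∀ i, (g (i - 1) : ℕ) ≠ g i := fun i h =>
    hg (i - 1) (by rw [sub_add_cancel]; exact Fin.ext h)
  have hlt : ∀ i, (g i : ℕ) < 3 := fun i => (g i).isLt
  refine ⟨prismColoring (fun i => 3 - g (i - 1) - g i) (fun _ i => g i),
    isProperEdgeColoring_prismColoring hm _ _ ?_ ?_ ?_,
    colorsBelow_prismColoring hm _ _ (fun i => by have := hne i; omega) (fun _ i => hlt i),
    prismColoring_rail hm _ _, prismColoring_rung hm _ _⟩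
  all_goals intro l i; have := hne i; have := hlt i; have := hlt (i - 1); omega

theorem exists_coloring_const_rungs (hm : 3 ≤ m) (he : Even m) {γ : ℕ} (hγ : γ < 3)
    (p : Fin 2 → Fin m) (x : Fin 2 → ℕ) (hx : ∀ l, x l < 3) (hxγ : ∀ l, x l ≠ γ) :
    ∃ C, IsProperEdgeColoring (prism m) C ∧ ColorsBelow (prism m) C 3 ∧
      (∀ i, C (rung i) = γ) ∧ ∀ l, C (rail l (p l)) = x l := by
  set c : Fin 2 → Fin m → ℕ := fun l => alternating (p l) (x l) (3 - γ - x l)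
  have hc : ∀ l i, c l i ≠ γ ∧ c l i < 3 := fun l i => by
    rcases alternating_eq_or_eq (p l) (x l) (3 - γ - x l) i with h | h <;>
      simp only [c, h] <;> have := hx l <;> have := hxγ l <;> omega
  refine ⟨prismColoring (fun _ => γ) c,
    isProperEdgeColoring_prismColoring hm _ _ (fun l i => (hc l i).1.symm)
      (fun l i => (hc l (i - 1)).1.symm) (fun l i => ?_),
    colorsBelow_prismColoring hm _ _ (fun _ => hγ) (fun l i => (hc l i).2),
    prismColoring_rung hm _ _, fun l => ?_⟩
  · have := alternating_ne_add_one he (p l) (x := x l) (y := 3 - γ - x l)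
      (by have := hx l; have := hxγ l; omega) (i - 1)
    rw [sub_add_cancel] at this
    exact this.symm
  · rw [prismColoring_rail hm]
    exact alternating_self _ _ _

end PrismColorings

section TwoEdges

variable {m : ℕ} [NeZero m]

theorem exists_mirror_coloring_rung_rung (hm : 3 ≤ m) {i k : Fin m} {L₁ L₂ : ℕ}
    (hk : (k - i).val = L₁ + 1) (hL : L₁ + L₂ + 2 = m) {x₁ y₁ x₂ y₂ a b : ℕ}
    (hx₁ : x₁ < 3) (hy₁ : y₁ < 3) (hx₂ : x₂ < 3) (hy₂ : y₂ < 3)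
    (h₁ : x₁ ≠ y₁) (h₂ : x₂ ≠ y₂) (h₁₀ : L₁ = 0 → y₁ = x₂) (h₁₁ : L₁ = 1 → y₁ ≠ x₂)
    (h₂₀ : L₂ = 0 → y₂ = x₁) (h₂₁ : L₂ = 1 → y₂ ≠ x₁)
    (ha : x₁ + y₁ + a = 3) (hb : x₂ + y₂ + b = 3) :
    ∃ C, IsProperEdgeColoring (prism m) C ∧ ColorsBelow (prism m) C 3 ∧
      C (rung i) = a ∧ C (rung k) = b := by
  have adj {x y : ℕ} (hx : x < 3) (hy : y < 3) (h : x ≠ y) :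
      (⊤ : SimpleGraph (Fin 3)).Adj ⟨x, hx⟩ ⟨y, hy⟩ := Fin.ne_of_val_ne h
  obtain ⟨g, hg, hg₁, hg₂⟩ := exists_cycle_coloring_through (by simp) (i - 1)
    (adj hx₁ hy₁ h₁).toWalk (adj hx₂ hy₂ h₂).toWalk L₁ L₂ (by simp; omega)
    (fun h => Fin.ext (h₁₀ h)) (fun h => Fin.ne_of_val_ne (h₁₁ h))
    (fun h => Fin.ext (h₂₀ h)) (fun h => Fin.ne_of_val_ne (h₂₁ h))
  obtain ⟨C, hC, hCb, -, hCr⟩ := exists_mirror_coloring hm g hg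
  have hk' : k = L₁ + 1 + i := by
    rw [← sub_eq_iff_eq_add, ← Fin.cast_val_eq_self (k - i), hk]; push_cast; rfl
  have e₁ := hg₁ 0 (by simp)
  have e₂ := hg₁ 1 (by simp)
  have e₃ := hg₂ 0 (by simp)
  have e₄ := hg₂ 1 (by simp)
  simp only [Adj.toWalk, Walk.length_cons, Walk.length_nil, Walk.getVert_zero,
    Walk.getVert_cons_succ, Nat.cast_add, Nat.cast_zero, Nat.cast_one, add_zero,
    sub_add_cancel] at e₁ e₂ e₃ e₄
  refine ⟨C, hC, hCb, ?_, ?_⟩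
  · rw [hCr, e₁, e₂]; dsimp only; omega
  · rw [hCr, show k - 1 = i - 1 + (0 + 1 + ↑L₁) by rw [hk']; ring, e₃,
      show k = i - 1 + (0 + 1 + ↑L₁ + 1) by rw [hk']; ring, e₄]
    dsimp only; omega

section

variable (hm : 3 ≤ m) (he : Even m)
include hm he

theorem exists_coloring_rung_rung {i k : Fin m} (hik : i ≠ k) {a b : ℕ} (ha : a < 3)
    (hb : b < 3) :
    ∃ C, IsProperEdgeColoring (prism m) C ∧ ColorsBelow (prism m) C 3 ∧
      C (rung i) = a ∧ C (rung k) = b := by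
  rcases eq_or_ne a b with rfl | hab
  · obtain ⟨C, hC, hCb, hr, -⟩ := exists_coloring_const_rungs hm he ha (fun _ => 0)
      (fun _ => (a + 1) % 3) (fun _ => by omega) (fun _ => by omega)
    exact ⟨C, hC, hCb, hr i, hr k⟩
  have hD : (k - i).val ≠ 0 := fun h => hik (sub_eq_zero.mp (Fin.ext h)).symm
  have hDm := (k - i).isLt
  by_cases h₁ : (k - i).val = 1
  · apply exists_mirror_coloring_rung_rung hm (L₁ := 0) (L₂ := m - 2)
      (x₁ := b) (y₁ := 3 - a - b) (x₂ := 3 - a - b) (y₂ := a) <;> omega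
  by_cases h₂ : (k - i).val = m - 1
  · apply exists_mirror_coloring_rung_rung hm (L₁ := m - 2) (L₂ := 0)
      (x₁ := 3 - a - b) (y₁ := b) (x₂ := a) (y₂ := 3 - a - b) <;> omega
  · apply exists_mirror_coloring_rung_rung hm (L₁ := (k - i).val - 1)
      (L₂ := m - (k - i).val - 1) (x₁ := b) (y₁ := 3 - a - b) (x₂ := a) (y₂ := 3 - a - b) <;>
      omega

theorem exists_coloring_rung_rail (i : Fin m) (l : Fin 2) (j : Fin m) {a b : ℕ} (ha : a < 3)
    (hb : b < 3) (hadj : EdgeAdj (prism m) (rung i) (rail l j) → a ≠ b) :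
    ∃ C, IsProperEdgeColoring (prism m) C ∧ ColorsBelow (prism m) C 3 ∧
      C (rung i) = a ∧ C (rail l j) = b := by
  rcases ne_or_eq a b with hab | rfl
  · obtain ⟨C, hC, hCb, hr, hl⟩ := exists_coloring_const_rungs hm he ha (fun _ => j)
      (fun _ => b) (fun _ => hb) (fun _ => hab.symm)
    exact ⟨C, hC, hCb, hr i, hl l⟩
  have hji : j ≠ i := by rintro rfl; exact hadj (edgeAdj_rung_rail hm j l) rfl
  have hji' : j ≠ i - 1 := by rintro rfl; exact hadj (edgeAdj_rung_rail_sub_one hm i l) rfl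
  set D := (j - (i - 1)).val with hD
  have hD0 : D ≠ 0 := fun h => hji' (sub_eq_zero.mp (Fin.ext h))
  have hD1 : D ≠ 1 := fun h => hji (by simpa using eq_add_one_of_val_sub_eq_one h)
  have hDm : D < m := Fin.isLt _
  have hxy : (⊤ : SimpleGraph (Fin 3)).Adj ⟨(a + 1) % 3, by omega⟩ ⟨(a + 2) % 3, by omega⟩ :=
    Fin.ne_of_val_ne (show (a + 1) % 3 ≠ (a + 2) % 3 by omega)
  obtain ⟨g, hg, hg₁, hg₂⟩ := exists_cycle_coloring_through (by simp) (i - 1) hxy.toWalk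
    (Walk.nil (u := (⟨a, ha⟩ : Fin 3))) (D - 1) (m - D) (by simp; omega) (by omega)
    (fun _ => Fin.ne_of_val_ne (show (a + 2) % 3 ≠ a by omega)) (by omega)
    (fun _ => Fin.ne_of_val_ne (show a ≠ (a + 1) % 3 by omega))
  obtain ⟨C, hC, hCb, hCl, hCr⟩ := exists_mirror_coloring hm g hg
  have e₁ := hg₁ 0 (by simp)
  have e₂ := hg₁ 1 (by simp)
  have e₃ := hg₂ 0 le_rfl
  simp only [Adj.toWalk, Walk.getVert_zero, Walk.getVert_cons_succ, Nat.cast_zero,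
    Nat.cast_one, add_zero, sub_add_cancel] at e₁ e₂
  rw [show hxy.toWalk.length + (D - 1) + 0 = D by simp; omega, hD, Fin.cast_val_eq_self,
    add_sub_cancel] at e₃
  refine ⟨C, hC, hCb, ?_, ?_⟩
  · rw [hCr, e₁, e₂]; dsimp only; omega
  · rw [hCl, e₃, Walk.getVert_zero]

theorem exists_coloring_rail_rail (l : Fin 2) (j : Fin m) (l' : Fin 2) (k : Fin m)
    (hne : rail l j ≠ rail l' k) {a b : ℕ} (ha : a < 3) (hb : b < 3)
    (hadj : EdgeAdj (prism m) (rail l j) (rail l' k) → a ≠ b) :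
    ∃ C, IsProperEdgeColoring (prism m) C ∧ ColorsBelow (prism m) C 3 ∧
      C (rail l j) = a ∧ C (rail l' k) = b := by
  rcases ne_or_eq l l' with hl | rfl
  · obtain ⟨C, hC, hCb, -, hx⟩ := exists_coloring_const_rungs hm he
      (γ := if a = b then (a + 1) % 3 else 3 - a - b) (by split_ifs <;> omega)
      (fun t => if t = l then j else k) (fun t => if t = l then a else b)
      (fun t => by split_ifs <;> assumption) (fun t => by split_ifs <;> omega)
    exact ⟨C, hC, hCb, by simpa using hx l, by simpa [hl.symm] using hx l'⟩
  have hjk : j ≠ k := by rintro rfl; exact hne rfl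
  set D := (k - j).val with hD
  have hD0 : D ≠ 0 := fun h => hjk (sub_eq_zero.mp (Fin.ext h)).symm
  have hDm : D < m := Fin.isLt _
  obtain ⟨g, hg, hg₁, hg₂⟩ := exists_cycle_coloring_through (by simp) j
    (Walk.nil (u := (⟨a, ha⟩ : Fin 3))) (Walk.nil (u := (⟨b, hb⟩ : Fin 3))) D (m - D)
    (by simp; omega) (by omega)
    (fun h => Fin.ne_of_val_ne (hadj (by
      rw [eq_add_one_of_val_sub_eq_one h]; exact edgeAdj_rail_rail_add_one hm l j)))
    (by omega)
    (fun h => Fin.ne_of_val_ne (hadj (by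
      rw [← add_one_eq_of_val_sub_add_one_eq (show D + 1 = m by omega)]
      exact (edgeAdj_rail_rail_add_one hm l k).symm)).symm)
  obtain ⟨C, hC, hCb, hCl, -⟩ := exists_mirror_coloring hm g hg
  have e₁ := hg₁ 0 le_rfl
  have e₂ := hg₂ 0 le_rfl
  simp only [Walk.length_nil, Walk.getVert_zero, Nat.cast_zero, add_zero, zero_add, hD,
    Fin.cast_val_eq_self, add_sub_cancel] at e₁ e₂
  exact ⟨C, hC, hCb, by rw [hCl, e₁], by rw [hCl, e₂]⟩

theorem exists_coloring_of_two_edges {e f : Sym2 (Fin m × Fin 2)}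
    (heG : e ∈ (prism m).edgeSet) (hfG : f ∈ (prism m).edgeSet) (hef : e ≠ f) {a b : ℕ}
    (ha : a < 3) (hb : b < 3) (hadj : EdgeAdj (prism m) e f → a ≠ b) :
    ∃ C, IsProperEdgeColoring (prism m) C ∧ ColorsBelow (prism m) C 3 ∧ C e = a ∧ C f = b := by
  rcases eq_rung_or_rail heG with ⟨i, rfl⟩ | ⟨l, j, rfl⟩ <;>
    rcases eq_rung_or_rail hfG with ⟨k, rfl⟩ | ⟨l', k, rfl⟩
  · exact exists_coloring_rung_rung hm he (fun h => hef (congrArg rung h)) ha hb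
  · exact exists_coloring_rung_rail hm he i l' k ha hb hadj
  · obtain ⟨C, hC, hCb, h₁, h₂⟩ :=
      exists_coloring_rung_rail hm he k l j hb ha fun h => (hadj h.symm).symm
    exact ⟨C, hC, hCb, h₂, h₁⟩
  · exact exists_coloring_rail_rail hm he l j l' k hef ha hb hadj

end

end TwoEdges

theorem stmt16 (n : ℕ) (hn : 2 ≤ n) (φ : Sym2 (Fin (2*n) × Fin 2) → Option ℕ)
    (hφ : IsPartialProperEdgeColoring ((cycleGraph (2*n)).boxProd (⊤ : SimpleGraph (Fin 2))) φ)
    (hc : UsesColors φ 3) (hcard : (Precolored φ).ncard = 2) :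
    Extendable ((cycleGraph (2*n)).boxProd (⊤ : SimpleGraph (Fin 2))) φ 3 := by
  have : NeZero (2 * n) := ⟨by omega⟩
  obtain ⟨e, f, hef, hP⟩ := Set.ncard_eq_two.mp hcard
  have he : e ∈ Precolored φ := by simp [hP]
  have hf : f ∈ Precolored φ := by simp [hP]
  obtain ⟨a, ha⟩ := Option.ne_none_iff_exists'.mp he
  obtain ⟨b, hb⟩ := Option.ne_none_iff_exists'.mp hf
  obtain ⟨C, hC, hCb, hCe, hCf⟩ := exists_coloring_of_two_edges (by omega) (even_two_mul n)
    (hφ.1 e he) (hφ.1 f hf) hef (hc e a ha) (hc f b hb)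
    fun h hab => hφ.2 h he (by rw [ha, hb, hab])
  exact extendable_of_precolored_eq_pair hP ha hb hC hCb hCe hCf
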